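/- arXiv:2104.01120 — 2 statements merged into one kernel-verified Lean document; each statement's English description precedes it below -/
import Mathlib

section
/- Let A be an n×n complex matrix (n ≥ 2) whose eigenvalues all have modulus at most 1 and whose spectral norm satisfies ‖A‖₂ ≤ M. Then for every k ≥ 1, ‖A^k‖₂ ≤ (e·k)^(n-1) · max{M^(n-1), 1} ≤ (e·k)^(n-1) · max{M^n, 1}. -/
open Matrix

/-- The spectral norm (ℓ² operator norm) of a complex matrix. -/
noncomputable def specNorm {m n : Type*} [Fintype m] [Fintype n] [DecidableEq n]
    (A : Matrix m n ℂ) : ℝ :=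
  ‖LinearMap.toContinuousLinearMap (Matrix.toEuclideanLin A)‖

/-!
Let `μ₀, μ₁, …` list the eigenvalues of `A` with multiplicity, padded with zeros, and let
`Pᵢ = (A - μ₀) ⋯ (A - μᵢ₋₁)`. Since `Pᵢ A = Pᵢ₊₁ + μᵢ Pᵢ`, every power expands as
`A ^ k = ∑ᵢ cₖᵢ Pᵢ` (Putzer's expansion) with `cₖ₊₁,ᵢ₊₁ = cₖᵢ + μᵢ₊₁ cₖ,ᵢ₊₁`, a perturbed Pascal
recursion giving `|cₖᵢ| ≤ C(k, i)` when all `|μⱼ| ≤ 1`. Cayley–Hamilton gives `Pₙ = 0`, and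
`‖Pᵢ‖ ≤ (‖A‖ + 1) ^ i`, so `‖A ^ k‖ ≤ ∑_{i<n} C(k, i) (‖A‖ + 1) ^ i`. For `k ≥ n` the estimate
`C(k, i) ≤ k ^ i / i!` and `∑ 2 ^ i / i! ≤ e²` bound this by `(e k) ^ (n - 1) max(M, 1) ^ (n - 1)`;
for `k < n` submultiplicativity suffices. The products `Pᵢ` play the role of the terms with `i`
nilpotent factors in the Schur-decomposition argument.
-/

open Polynomial Finset
open scoped Nat

theorem max_pow_one_eq_max_one_pow {M : ℝ} (hM : 0 ≤ M) (r : ℕ) :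
    max (M ^ r) 1 = max M 1 ^ r := by
  rcases le_total M 1 with h | h
  · simp [h, pow_le_one₀ hM h]
  · simp [h, one_le_pow₀ h]

theorem sum_choose_mul_two_pow_le {r k : ℕ} (hrk : r < k) :
    ∑ i ∈ range (r + 1), (k.choose i : ℝ) * 2 ^ i ≤ (Real.exp 1 * k) ^ r := by
  obtain rfl | rfl | hr := show r = 0 ∨ r = 1 ∨ 2 ≤ r by omega
  · simp
  · have hk2 : (2 : ℝ) ≤ k := by exact_mod_cast hrk
    have := Real.exp_one_gt_d9
    simp only [sum_range_succ, range_one, sum_singleton, Nat.choose_zero_right,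
      Nat.choose_one_right, Nat.cast_one, pow_zero, pow_one, mul_one]
    nlinarith
  -- `e ^ 2 ≤ e ^ r` is where `r ≥ 2` is needed; for `r = 1` one uses `k ≥ 2` instead.
  have hk : (1 : ℝ) ≤ k := by exact_mod_cast Nat.one_le_of_lt hrk
  calc ∑ i ∈ range (r + 1), (k.choose i : ℝ) * 2 ^ i
      ≤ ∑ i ∈ range (r + 1), 2 ^ i / i ! * (k : ℝ) ^ r := by
        refine sum_le_sum fun i hi => ?_
        calc (k.choose i : ℝ) * 2 ^ i ≤ (k : ℝ) ^ i / i ! * 2 ^ i := by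
              gcongr; exact Nat.choose_le_pow_div i k
          _ = 2 ^ i / i ! * (k : ℝ) ^ i := by ring
          _ ≤ 2 ^ i / i ! * (k : ℝ) ^ r := by
              gcongr; exact Nat.lt_succ_iff.mp (mem_range.mp hi)
    _ = (∑ i ∈ range (r + 1), (2 : ℝ) ^ i / i !) * (k : ℝ) ^ r := (sum_mul _ _ _).symm
    _ ≤ Real.exp 2 * (k : ℝ) ^ r := by gcongr; exact Real.sum_le_exp_of_nonneg zero_le_two _
    _ ≤ Real.exp r * (k : ℝ) ^ r := by gcongr; exact_mod_cast hr
    _ = (Real.exp 1 * k) ^ r := by rw [mul_pow, ← Real.exp_one_pow]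

section Putzer

variable {𝕜 R : Type*}

def putzerCoeff [Semiring 𝕜] (μ : ℕ → 𝕜) : ℕ → ℕ → 𝕜
  | 0, 0 => 1
  | 0, _ + 1 => 0
  | k + 1, 0 => μ 0 * putzerCoeff μ k 0
  | k + 1, i + 1 => putzerCoeff μ k i + μ (i + 1) * putzerCoeff μ k (i + 1)

def putzerProd [CommRing 𝕜] [Ring R] [Algebra 𝕜 R] (A : R) (μ : ℕ → 𝕜) : ℕ → R
  | 0 => 1
  | i + 1 => putzerProd A μ i * (A - algebraMap 𝕜 R (μ i))

theorem norm_putzerCoeff_le [SeminormedRing 𝕜] [NormOneClass 𝕜] {μ : ℕ → 𝕜}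
    (hμ : ∀ j, ‖μ j‖ ≤ 1) : ∀ k i, ‖putzerCoeff μ k i‖ ≤ k.choose i
  | 0, 0 => by simp [putzerCoeff]
  | 0, i + 1 => by simp [putzerCoeff]
  | k + 1, 0 =>
    calc ‖putzerCoeff μ (k + 1) 0‖ ≤ ‖μ 0‖ * ‖putzerCoeff μ k 0‖ := norm_mul_le _ _
      _ ≤ 1 * k.choose 0 := by gcongr; exacts [hμ 0, norm_putzerCoeff_le hμ k 0]
      _ = (k + 1).choose 0 := by simp
  | k + 1, i + 1 =>
    calc ‖putzerCoeff μ (k + 1) (i + 1)‖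
        ≤ ‖putzerCoeff μ k i‖ + ‖μ (i + 1)‖ * ‖putzerCoeff μ k (i + 1)‖ :=
          norm_add_le_of_le le_rfl (norm_mul_le _ _)
      _ ≤ k.choose i + 1 * k.choose (i + 1) := by
          gcongr
          exacts [norm_putzerCoeff_le hμ k i, hμ _, norm_putzerCoeff_le hμ k (i + 1)]
      _ = (k + 1).choose (i + 1) := by rw [Nat.choose_succ_succ']; push_cast; ring

section Algebra

variable [CommRing 𝕜] [Ring R] [Algebra 𝕜 R] (A : R) (μ : ℕ → 𝕜)

theorem putzerProd_mul_self (i : ℕ) :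
    putzerProd A μ i * A = putzerProd A μ (i + 1) + μ i • putzerProd A μ i := by
  rw [putzerProd, mul_sub, ← Algebra.commutes, ← Algebra.smul_def, sub_add_cancel]

theorem putzerProd_eq_aeval (i : ℕ) :
    putzerProd A μ i = aeval A (∏ j ∈ range i, (X - C (μ j))) := by
  induction i with
  | zero => simp [putzerProd]
  | succ i ih => simp [putzerProd, prod_range_succ, ih]

theorem pow_eq_sum_putzerCoeff_smul {m : ℕ} (hm : putzerProd A μ m = 0) (k : ℕ) :
    A ^ k = ∑ i ∈ range m, putzerCoeff μ k i • putzerProd A μ i := by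
  cases m with
  | zero =>
    have : Subsingleton R := subsingleton_of_zero_eq_one (by simpa [putzerProd] using hm.symm)
    exact Subsingleton.elim _ _
  | succ m =>
    induction k with
    | zero => simp [sum_range_succ', putzerCoeff, putzerProd]
    | succ k ih =>
      rw [pow_succ, ih, sum_mul]
      simp only [smul_mul_assoc, putzerProd_mul_self, smul_add, smul_smul]
      rw [sum_add_distrib, sum_range_succ (fun i => putzerCoeff μ k i • putzerProd A μ (i + 1)),
        hm, smul_zero, add_zero, sum_range_succ' (fun i => (putzerCoeff μ k i * μ i) • _),
        sum_range_succ' (fun i => putzerCoeff μ (k + 1) i • _)]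
      simp only [putzerCoeff, add_smul, sum_add_distrib, mul_comm]
      abel

end Algebra

section Normed

variable [NormedField 𝕜] [SeminormedRing R] [NormedAlgebra 𝕜 R] [NormOneClass R] {A : R}
  {μ : ℕ → 𝕜}

theorem norm_putzerProd_le (hμ : ∀ j, ‖μ j‖ ≤ 1) (i : ℕ) :
    ‖putzerProd A μ i‖ ≤ (‖A‖ + 1) ^ i := by
  induction i with
  | zero => simp [putzerProd]
  | succ i ih =>
    calc ‖putzerProd A μ (i + 1)‖ ≤ ‖putzerProd A μ i‖ * (‖A‖ + ‖μ i‖) := by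
          rw [putzerProd, ← norm_algebraMap' R (μ i)]
          exact norm_mul_le_of_le le_rfl (norm_sub_le _ _)
      _ ≤ (‖A‖ + 1) ^ i * (‖A‖ + 1) := by gcongr; exact hμ i
      _ = (‖A‖ + 1) ^ (i + 1) := (pow_succ _ _).symm

theorem norm_pow_le_sum_choose_mul_pow (hμ : ∀ j, ‖μ j‖ ≤ 1) {m : ℕ}
    (hm : putzerProd A μ m = 0) (k : ℕ) :
    ‖A ^ k‖ ≤ ∑ i ∈ range m, (k.choose i : ℝ) * (‖A‖ + 1) ^ i := by
  rw [pow_eq_sum_putzerCoeff_smul A μ hm]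
  refine (norm_sum_le _ _).trans (sum_le_sum fun i _ => ?_)
  rw [norm_smul]
  exact mul_le_mul (norm_putzerCoeff_le hμ k i) (norm_putzerProd_le hμ i) (norm_nonneg _)
    (Nat.cast_nonneg _)

theorem norm_pow_le_exp_one_mul_pow (hμ : ∀ j, ‖μ j‖ ≤ 1) {r : ℕ}
    (hP : putzerProd A μ (r + 1) = 0) {m : ℝ} (hAm : ‖A‖ ≤ m) (hm : 1 ≤ m) {k : ℕ}
    (hrk : r < k) : ‖A ^ k‖ ≤ (Real.exp 1 * k) ^ r * m ^ r :=
  calc ‖A ^ k‖ ≤ ∑ i ∈ range (r + 1), (k.choose i : ℝ) * (‖A‖ + 1) ^ i :=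
        norm_pow_le_sum_choose_mul_pow hμ hP k
    _ ≤ ∑ i ∈ range (r + 1), (k.choose i : ℝ) * 2 ^ i * m ^ r := by
        refine sum_le_sum fun i hi => ?_
        rw [mul_assoc]
        gcongr
        calc (‖A‖ + 1) ^ i ≤ (2 * m) ^ i := by gcongr; linarith
          _ = 2 ^ i * m ^ i := mul_pow _ _ _
          _ ≤ 2 ^ i * m ^ r := by gcongr; exact Nat.lt_succ_iff.mp (mem_range.mp hi)
    _ = (∑ i ∈ range (r + 1), (k.choose i : ℝ) * 2 ^ i) * m ^ r := (sum_mul _ _ _).symm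
    _ ≤ (Real.exp 1 * k) ^ r * m ^ r := by gcongr; exact sum_choose_mul_two_pow_le hrk

end Normed

end Putzer

theorem Matrix.exists_putzerProd_eq_zero {K ι : Type*} [Field K] [IsAlgClosed K] [Fintype ι]
    [DecidableEq ι] (A : Matrix ι ι K) :
    ∃ μ : ℕ → K, (∀ j, μ j = 0 ∨ μ j ∈ spectrum K A) ∧ putzerProd A μ (Fintype.card ι) = 0 := by
  set l := A.charpoly.roots.toList
  have hlen : l.length = Fintype.card ι := by
    simp [l, IsAlgClosed.card_roots_eq_natDegree, charpoly_natDegree_eq_dim]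
  refine ⟨fun j => l.getD j 0, fun j => ?_, ?_⟩
  · rcases lt_or_ge j l.length with hj | hj
    · right
      show l.getD j 0 ∈ _
      rw [List.getD_eq_getElem _ _ hj]
      exact mem_spectrum_of_isRoot_charpoly
        (isRoot_of_mem_roots (Multiset.mem_toList.mp (List.getElem_mem hj)))
    · exact Or.inl (List.getD_eq_default _ _ hj)
  · have hroots : ∏ j ∈ range l.length, (X - C (l.getD j 0)) = A.charpoly := by
      rw [← Fin.prod_univ_eq_prod_range (fun j => X - C (l.getD j 0))]
      simp only [Fin.is_lt, List.getD_eq_getElem]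
      rw [Fin.prod_univ_fun_getElem l (fun a => X - C a), ← Multiset.prod_coe,
        ← Multiset.map_coe, Multiset.coe_toList]
      exact prod_multiset_X_sub_C_of_monic_of_roots_card_eq (charpoly_monic A)
        IsAlgClosed.card_roots_eq_natDegree
    rw [putzerProd_eq_aeval, ← hlen, hroots, aeval_self_charpoly]

open scoped Matrix.Norms.L2Operator

theorem matrix_power_bound {n : ℕ} (hn : 2 ≤ n) (A : Matrix (Fin n) (Fin n) ℂ) (M : ℝ)
    (hspec : ∀ μ ∈ spectrum ℂ A, ‖μ‖ ≤ 1) (hA : specNorm A ≤ M) :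
    ∀ k : ℕ, 1 ≤ k →
      specNorm (A ^ k) ≤ (Real.exp 1 * k) ^ (n - 1) * max (M ^ (n - 1)) 1 ∧
      (Real.exp 1 * k) ^ (n - 1) * max (M ^ (n - 1)) 1 ≤
        (Real.exp 1 * k) ^ (n - 1) * max (M ^ n) 1 := by
  intro k hk
  change ‖A‖ ≤ M at hA
  have hAm : ‖A‖ ≤ max M 1 := hA.trans (le_max_left M 1)
  have hm : 1 ≤ max M 1 := le_max_right M 1
  rw [max_pow_one_eq_max_one_pow ((norm_nonneg A).trans hA),
    max_pow_one_eq_max_one_pow ((norm_nonneg A).trans hA)]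
  refine ⟨?_, by gcongr; exact Nat.sub_le n 1⟩
  change ‖A ^ k‖ ≤ _
  have : Nonempty (Fin n) := ⟨⟨0, by omega⟩⟩
  rcases lt_or_ge k n with hkn | hnk
  · have hek : 1 ≤ Real.exp 1 * k :=
      one_le_mul_of_one_le_of_one_le (Real.one_le_exp zero_le_one) (Nat.one_le_cast.mpr hk)
    calc ‖A ^ k‖ ≤ ‖A‖ ^ k := norm_pow_le' A hk
      _ ≤ max M 1 ^ (n - 1) :=
          (pow_le_pow_left₀ (norm_nonneg A) hAm k).trans (pow_le_pow_right₀ hm (by omega))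
      _ ≤ (Real.exp 1 * k) ^ (n - 1) * max M 1 ^ (n - 1) :=
          le_mul_of_one_le_left (by positivity) (one_le_pow₀ hek)
  · obtain ⟨μ, hμ, hP⟩ := Matrix.exists_putzerProd_eq_zero A
    have hμ1 : ∀ j, ‖μ j‖ ≤ 1 := fun j => (hμ j).elim (fun h => by simp [h]) (hspec _)
    obtain ⟨r, rfl⟩ : ∃ r, n = r + 1 := ⟨n - 1, by omega⟩
    rw [Fintype.card_fin] at hP
    simpa using norm_pow_le_exp_one_mul_pow hμ1 hP hAm hm (by omega)
end

section
/- Let 0 < ρ < 1/2 and consider the n×n matrix A with ρ on the diagonal and superdiagonal (zeros elsewhere) and H = [e_1, ρ·e_n] ∈ ℝ^{n×2}. Then for every k ≥ 1, the (2,2) entry of the controllability Gramian satisfies e_2' Γ_k(A,H) e_2 ≤ (2ρ)^{2n−2} / (1 − 4ρ²). -/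
open Matrix

/-- The controllability Gramian `Γ_k(A,H) = Σ_{s=0}^{k-1} Aˢ H Hᵀ (Aᵀ)ˢ`. -/
noncomputable def gramian {n r : ℕ} (A : Matrix (Fin n) (Fin n) ℝ)
    (H : Matrix (Fin n) (Fin r) ℝ) (k : ℕ) : Matrix (Fin n) (Fin n) ℝ :=
  ∑ s ∈ Finset.range k, A ^ s * H * Hᵀ * (Aᵀ) ^ s


noncomputable def Amat (n : ℕ) (ρ : ℝ) : Matrix (Fin n) (Fin n) ℝ :=
  Matrix.of fun i j : Fin n =>
    if (i : ℕ) = (j : ℕ) ∨ (j : ℕ) = (i : ℕ) + 1 then ρ else 0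

lemma Apow_entry {n : ℕ} (ρ : ℝ) (s : ℕ) (i j : Fin n) :
    ((Amat n ρ) ^ s) i j
      = if (i : ℕ) ≤ (j : ℕ) then ρ ^ s * (s.choose ((j : ℕ) - (i : ℕ))) else 0 := by
  induction s generalizing j with
  | zero =>
    by_cases h : i = j
    · subst h; simp [Matrix.one_apply]
    · have hne : (i:ℕ) ≠ (j:ℕ) := fun hh => h (Fin.ext hh)
      rw [pow_zero, Matrix.one_apply_ne h]
      split
      · next hle =>
        have h0 : 0 < (j:ℕ) - (i:ℕ) := by omega
        simp [Nat.choose_eq_zero_of_lt h0]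
      · rfl
  | succ s ih =>
    rw [pow_succ, Matrix.mul_apply]
    have hsplit : ∀ m : Fin n,
        ((Amat n ρ) ^ s) i m * (Amat n ρ) m j
          = (if m = j then ((Amat n ρ) ^ s) i m * ρ else 0)
            + (if (m : ℕ) + 1 = (j : ℕ) then ((Amat n ρ) ^ s) i m * ρ else 0) := by
      intro m
      have : (Amat n ρ) m j = (if m = j then ρ else 0) + (if (m:ℕ)+1 = (j:ℕ) then ρ else 0) := by
        simp only [Amat, Matrix.of_apply]
        by_cases h1 : m = j
        · subst h1
          have hne : ¬((m:ℕ)+1 = (m:ℕ)) := by omega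
          simp [hne]
        · have h1' : (m:ℕ) ≠ (j:ℕ) := fun hh => h1 (Fin.ext hh)
          by_cases h2 : (m:ℕ)+1 = (j:ℕ) <;> simp [h1, h1', h2] <;> omega
      rw [this, mul_add, mul_ite, mul_zero, mul_ite, mul_zero]
    rw [Finset.sum_congr rfl fun m _ => hsplit m, Finset.sum_add_distrib]
    rw [Finset.sum_ite_eq' Finset.univ j fun m => ((Amat n ρ) ^ s) i m * ρ]
    have hsecond : (∑ m : Fin n, if (m : ℕ) + 1 = (j : ℕ) then ((Amat n ρ) ^ s) i m * ρ else 0)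
        = if (i:ℕ) + 1 ≤ (j:ℕ) then ρ ^ s * (s.choose ((j:ℕ) - (i:ℕ) - 1)) * ρ else
          (if 1 ≤ (j:ℕ) then 0 else 0) := by
      by_cases hj : 1 ≤ (j:ℕ)
      · have hm : (j:ℕ) - 1 < n := by omega
        set m₀ : Fin n := ⟨(j:ℕ) - 1, hm⟩ with hm₀
        have hm₀v : (m₀ : ℕ) = (j:ℕ) - 1 := rfl
        have hcond : ∀ m : Fin n, ((m : ℕ) + 1 = (j : ℕ)) ↔ m = m₀ := by
          intro m; rw [Fin.ext_iff]; simp [hm₀]; omega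
        rw [Finset.sum_congr rfl fun m _ => by rw [if_congr (hcond m) rfl rfl]]
        rw [Finset.sum_ite_eq' Finset.univ m₀ fun m => ((Amat n ρ) ^ s) i m * ρ]
        rw [if_pos (Finset.mem_univ m₀)]
        rw [ih m₀]
        have : (m₀ : ℕ) = (j:ℕ) - 1 := rfl
        by_cases hij : (i:ℕ) + 1 ≤ (j:ℕ)
        · rw [if_pos hij, if_pos (show (i:ℕ) ≤ (m₀:ℕ) by rw [hm₀v]; omega)]
          rw [hm₀v, show (j:ℕ)-1-(i:ℕ) = (j:ℕ)-(i:ℕ)-1 from by omega]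
        · rw [if_neg hij, if_neg (show ¬ (i:ℕ) ≤ (m₀:ℕ) by rw [hm₀v]; omega), zero_mul,
            if_pos hj]
      · rw [if_neg (by omega : ¬ (i:ℕ)+1 ≤ (j:ℕ)), if_neg hj]
        apply Finset.sum_eq_zero
        intro m _
        rw [if_neg (by omega)]
    rw [hsecond, if_pos (Finset.mem_univ j), ih j]
    by_cases hij : (i:ℕ) ≤ (j:ℕ)
    · rw [if_pos hij]
      by_cases hij1 : (i:ℕ) + 1 ≤ (j:ℕ)
      · rw [if_pos hij, if_pos hij1]
        have ht : (j:ℕ) - (i:ℕ) = ((j:ℕ) - (i:ℕ) - 1) + 1 := by omega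
        rw [ht, Nat.choose_succ_succ]
        push_cast
        ring
      · have hji : (j:ℕ) = (i:ℕ) := by omega
        rw [if_pos hij, if_neg hij1]
        simp [hji]
        ring
    · rw [if_neg hij, if_neg hij, if_neg (by omega)]
      simp

lemma gram_entry {n : ℕ} (hn : 2 ≤ n) (ρ : ℝ) (k : ℕ) :
    gramian (Amat n ρ) (Matrix.of fun i (j : Fin 2) =>
        if j = 0 then (if (i : ℕ) = 0 then (1 : ℝ) else 0)
        else (if (i : ℕ) = n - 1 then ρ else 0)) k ⟨1, by omega⟩ ⟨1, by omega⟩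
    = ∑ s ∈ Finset.range k, ρ ^ (2*s+2) * ((s.choose (n-2) : ℝ))^2 := by
  set H : Matrix (Fin n) (Fin 2) ℝ := Matrix.of fun i (j : Fin 2) =>
        if j = 0 then (if (i : ℕ) = 0 then (1 : ℝ) else 0)
        else (if (i : ℕ) = n - 1 then ρ else 0) with hH
  set e2 : Fin n := ⟨1, by omega⟩ with he2
  unfold gramian
  rw [Matrix.sum_apply]
  refine Finset.sum_congr rfl fun s _ => ?_
  have hfac : Amat n ρ ^ s * H * Hᵀ * (Amat n ρ)ᵀ ^ s
      = (Amat n ρ ^ s * H) * (Amat n ρ ^ s * H)ᵀ := by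
    rw [Matrix.transpose_mul, Matrix.transpose_pow, Matrix.mul_assoc]
  rw [hfac, Matrix.mul_apply]
  have hB0 : (Amat n ρ ^ s * H) e2 0 = 0 := by
    rw [Matrix.mul_apply]
    apply Finset.sum_eq_zero
    intro m _
    by_cases hm : (m : ℕ) = 0
    · have : ¬ ((e2:ℕ) ≤ (m:ℕ)) := by simp [he2]; omega
      rw [Apow_entry, if_neg this, zero_mul]
    · simp [hH, hm]
  have hB1 : (Amat n ρ ^ s * H) e2 1 = ρ ^ (s+1) * (s.choose (n-2)) := by
    rw [Matrix.mul_apply]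
    have hc : n - 1 < n := by omega
    rw [Finset.sum_eq_single (⟨n-1, hc⟩ : Fin n)]
    · have h1 : ((⟨n-1,hc⟩ : Fin n) : ℕ) = n - 1 := rfl
      have hle : (e2:ℕ) ≤ n - 1 := by simp [he2]; omega
      rw [Apow_entry, if_pos hle]
      simp [hH, h1, he2]
      rw [show n - 1 - 1 = n - 2 from by omega]
      ring
    · intro m _ hm
      have hm' : (m:ℕ) ≠ n - 1 := by
        intro hh; exact hm (Fin.ext (by simp [hh]))
      simp [hH, hm']
    · intro h; exact absurd (Finset.mem_univ _) h
  rw [Fin.sum_univ_two]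
  rw [Matrix.transpose_apply, Matrix.transpose_apply, hB0, hB1]
  ring

lemma sum_bound {n : ℕ} (hn : 2 ≤ n) (ρ : ℝ) (hρ0 : 0 < ρ) (hρ1 : ρ < 1/2) (k : ℕ) :
    (∑ s ∈ Finset.range k, ρ ^ (2*s+2) * ((s.choose (n-2) : ℝ))^2)
      ≤ (2 * ρ) ^ (2 * n - 2) / (1 - 4 * ρ ^ 2) := by
  have hr0 : (0:ℝ) ≤ 4 * ρ^2 := by positivity
  have hr1 : 4 * ρ^2 < 1 := by nlinarith
  have hsub : Finset.Ico (n-2) k ⊆ Finset.range k := by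
    intro s hs; rw [Finset.mem_range]; exact (Finset.mem_Ico.mp hs).2
  have hzero : ∀ s ∈ Finset.range k, s ∉ Finset.Ico (n-2) k →
      ρ ^ (2*s+2) * ((s.choose (n-2) : ℝ))^2 = 0 := by
    intro s hs hns
    have : s < n - 2 := by
      rw [Finset.mem_range] at hs; rw [Finset.mem_Ico] at hns; omega
    rw [Nat.choose_eq_zero_of_lt this]
    simp
  rw [← Finset.sum_subset hsub hzero]
  have hterm : ∀ s ∈ Finset.Ico (n-2) k,
      ρ ^ (2*s+2) * ((s.choose (n-2) : ℝ))^2 ≤ ρ^2 * (4 * ρ^2) ^ s := by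
    intro s _
    have hch : (s.choose (n-2) : ℝ) ≤ 2 ^ s := by
      have h1 : s.choose (n-2) ≤ 2 ^ s := by
        by_cases h : n - 2 ≤ s
        · calc s.choose (n-2) ≤ ∑ m ∈ Finset.range (s+1), s.choose m :=
                Finset.single_le_sum (fun m _ => Nat.zero_le _)
                  (Finset.mem_range.mpr (by omega))
            _ = 2 ^ s := Nat.sum_range_choose s
        · rw [Nat.choose_eq_zero_of_lt (by omega)]; exact Nat.zero_le _
      exact_mod_cast Nat.cast_le.mpr h1
    have hch0 : (0:ℝ) ≤ (s.choose (n-2) : ℝ) := Nat.cast_nonneg _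
    have : ((s.choose (n-2) : ℝ))^2 ≤ (2^s)^2 := by nlinarith
    calc ρ ^ (2*s+2) * ((s.choose (n-2) : ℝ))^2
        ≤ ρ ^ (2*s+2) * (2^s)^2 := by
          apply mul_le_mul_of_nonneg_left this (by positivity)
      _ = ρ^2 * (4 * ρ^2) ^ s := by
          rw [mul_pow, show ((4:ℝ))^s = (2^s)^2 from by
            rw [show (4:ℝ) = 2^2 from by norm_num, ← pow_mul, ← pow_mul, Nat.mul_comm],
            pow_add, ← pow_mul]
          ring
  calc (∑ s ∈ Finset.Ico (n-2) k, ρ ^ (2*s+2) * ((s.choose (n-2) : ℝ))^2)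
      ≤ ∑ s ∈ Finset.Ico (n-2) k, ρ^2 * (4 * ρ^2) ^ s := Finset.sum_le_sum hterm
    _ = ρ^2 * ∑ s ∈ Finset.Ico (n-2) k, (4 * ρ^2) ^ s := by rw [Finset.mul_sum]
    _ ≤ ρ^2 * ((4 * ρ^2) ^ (n-2) / (1 - 4 * ρ^2)) := by
        apply mul_le_mul_of_nonneg_left (geom_sum_Ico_le_of_lt_one hr0 hr1) (by positivity)
    _ ≤ (2 * ρ) ^ (2 * n - 2) / (1 - 4 * ρ ^ 2) := by
        have hX : (0:ℝ) ≤ (4*ρ^2)^(n-2) := by positivity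
        have key : ρ^2 * (4*ρ^2)^(n-2) ≤ (2*ρ)^(2*n-2) := by
          have he : (2*ρ)^(2*n-2) = (4*ρ^2)^(n-2) * (4*ρ^2) := by
            rw [show 2*n-2 = 2*((n-2)+1) from by omega, pow_mul,
              show ((2:ℝ)*ρ)^2 = 4*ρ^2 from by ring, pow_succ]
          rw [he]
          nlinarith
        have hd : (0:ℝ) < 1 - 4*ρ^2 := by linarith
        rw [mul_div_assoc']
        gcongr

theorem difficult_system_gramian_entry_bound {n : ℕ} (hn : 2 ≤ n) (ρ : ℝ)
    (hρ0 : 0 < ρ) (hρ1 : ρ < 1 / 2) (k : ℕ) (hk : 1 ≤ k) :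
    gramian
      (Matrix.of fun i j : Fin n =>
        if (i : ℕ) = (j : ℕ) ∨ (j : ℕ) = (i : ℕ) + 1 then ρ else 0)
      (Matrix.of fun i (j : Fin 2) =>
        if j = 0 then (if (i : ℕ) = 0 then (1 : ℝ) else 0)
        else (if (i : ℕ) = n - 1 then ρ else 0))
      k ⟨1, by omega⟩ ⟨1, by omega⟩ ≤ (2 * ρ) ^ (2 * n - 2) / (1 - 4 * ρ ^ 2) := by
  have := gram_entry hn ρ k
  rw [show (Matrix.of fun i j : Fin n =>
        if (i : ℕ) = (j : ℕ) ∨ (j : ℕ) = (i : ℕ) + 1 then ρ else 0) = Amat n ρ from rfl]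
  rw [this]
  exact sum_bound hn ρ hρ0 (by linarith) k
end
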